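/- arXiv:1004.2422 — 8 statements merged into one kernel-verified Lean document; each statement's English description precedes it below -/
import Mathlib

section
/- Let A be a finite set and let X ⊆ A^ℤ be a subshift. Then the following are equivalent: (a) X is strongly irreducible; (b) there is an integer N₀ ≥ 0 such that for all words u, v ∈ L(X) and every integer N ≥ N₀, there exists a word w ∈ A* of length N satisfying uwv ∈ L(X). -/
open Pointwise Filter

/-- The shift action of `ℤ` on bi-infinite sequences: `(n • x)(m) = x(m - n)`. -/
def shiftZ {A : Type*} (n : ℤ) (x : ℤ → A) : ℤ → A := fun m => x (m - n)

/-- A subshift of `A^ℤ`: closed and shift-invariant (prodiscrete topology). -/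
def IsSubshiftZ {A : Type*} [TopologicalSpace A] (X : Set (ℤ → A)) : Prop :=
  IsClosed X ∧ ∀ n : ℤ, ∀ x ∈ X, shiftZ n x ∈ X

/-- The `Δ`-neighborhood `Ω^{+Δ} = {n : (n + Δ) ∩ Ω ≠ ∅}` (additive notation). -/
def plusNbhdZ (Ω Δ : Set ℤ) : Set ℤ := {n : ℤ | ∃ d ∈ Δ, n + d ∈ Ω}

/-- `Δ`-irreducibility of a subshift of `A^ℤ`. -/
def DeltaIrreducibleZ {A : Type*} (Δ : Finset ℤ) (X : Set (ℤ → A)) : Prop :=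
  ∀ Ω₁ Ω₂ : Finset ℤ,
    plusNbhdZ (Ω₁ : Set ℤ) (Δ : Set ℤ) ∩ (Ω₂ : Set ℤ) = ∅ →
    ∀ x₁ ∈ X, ∀ x₂ ∈ X,
      ∃ x ∈ X, (∀ n ∈ Ω₁, x n = x₁ n) ∧ (∀ n ∈ Ω₂, x n = x₂ n)

/-- Strong irreducibility for subshifts of `A^ℤ`. -/
def StronglyIrreducibleZ {A : Type*} (X : Set (ℤ → A)) : Prop :=
  ∃ Δ : Finset ℤ, DeltaIrreducibleZ Δ X

/-- The language of a subshift `X ⊆ A^ℤ`: all words `x(1) x(2) ⋯ x(n)` with `x ∈ X`. -/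
def language {A : Type*} (X : Set (ℤ → A)) : Set (List A) :=
  {w : List A | ∃ x ∈ X, w = (List.range w.length).map (fun i => x ((i : ℤ) + 1))}

/-!
If `X` is `Δ`-irreducible, reading `x₁` on a window and `x₂` on a second window more than
`max |Δ|` further on, and gluing them in `X`, produces the bridge. Conversely, a bridge glues
`x₁` on an interval to `x₂` on a later interval as soon as the gap is at least `N₀`. Two finite
sets `Ω₁, Ω₂` at distance more than `N₀` are then glued by induction on `|Ω₁| + |Ω₂|`: if
`max Ω₁ < max Ω₂`, glue `Ω₁` to the part of `Ω₂` below `a = max Ω₁` first, and then glue the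
result on `(-∞, a]` to `x₂` on `(a + N₀, ∞)`, which contains the rest of `Ω₂`.
-/

open Finset

def SpecificationWithGap {A : Type*} (X : Set (ℤ → A)) (N₀ : ℕ) : Prop :=
  ∀ u ∈ language X, ∀ v ∈ language X, ∀ N : ℕ, N₀ ≤ N →
    ∃ w : List A, w.length = N ∧ (u ++ w ++ v) ∈ language X

def window {A : Type*} (x : ℤ → A) (p : ℤ) (L : ℕ) : List A :=
  (List.range L).map fun i : ℕ => x (p + i)

section Window

variable {A : Type*}

@[simp]
theorem length_window (x : ℤ → A) (p : ℤ) (L : ℕ) : (window x p L).length = L := by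
  simp [window]

theorem window_add (x : ℤ → A) (p : ℤ) (m n : ℕ) :
    window x p (m + n) = window x p m ++ window x (p + m) n := by
  simp only [window, List.range_add, List.map_append, List.map_map]
  congr 2
  ext i
  simp only [Function.comp_apply, Nat.cast_add, add_assoc]

theorem window_eq_window_iff {x y : ℤ → A} {p : ℤ} {L : ℕ} :
    window x p L = window y p L ↔ ∀ n, p ≤ n → n < p + L → x n = y n := by
  simp only [window, List.map_inj_left, List.mem_range]
  refine ⟨fun h n hpn hnL => ?_, fun h i hi => h _ (by omega) (by omega)⟩
  simpa [Int.toNat_of_nonneg (sub_nonneg.2 hpn)] using h (n - p).toNat (by omega)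

theorem window_shiftZ (k : ℤ) (x : ℤ → A) (p : ℤ) (L : ℕ) :
    window (shiftZ k x) (p + k) L = window x p L := by
  simp only [window, shiftZ, add_right_comm p k, add_sub_cancel_right]

theorem mem_language_iff_window {X : Set (ℤ → A)} {w : List A} :
    w ∈ language X ↔ ∃ x ∈ X, window x 1 w.length = w := by
  simp only [language, window, add_comm (1 : ℤ), bind_pure_comp, List.map_eq_map, List.map_map,
    eq_comm]
  rfl

theorem mem_language_iff_window_at {X : Set (ℤ → A)}
    (hsh : ∀ n : ℤ, ∀ x ∈ X, shiftZ n x ∈ X) (p : ℤ) {w : List A} :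
    w ∈ language X ↔ ∃ x ∈ X, window x p w.length = w := by
  rw [mem_language_iff_window]
  constructor
  · rintro ⟨x, hx, hw⟩
    exact ⟨shiftZ (p - 1) x, hsh _ _ hx, by simpa using (window_shiftZ (p - 1) x 1 _).trans hw⟩
  · rintro ⟨x, hx, hw⟩
    exact ⟨shiftZ (1 - p) x, hsh _ _ hx, by simpa using (window_shiftZ (1 - p) x p _).trans hw⟩

theorem window_mem_language {X : Set (ℤ → A)}
    (hsh : ∀ n : ℤ, ∀ x ∈ X, shiftZ n x ∈ X) {x : ℤ → A} (hx : x ∈ X) (p : ℤ) (L : ℕ) :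
    window x p L ∈ language X :=
  (mem_language_iff_window_at hsh p).2 ⟨x, hx, by rw [length_window]⟩

end Window

theorem DeltaIrreducibleZ.specificationWithGap {A : Type*} {Δ : Finset ℤ} {X : Set (ℤ → A)}
    (hΔ : DeltaIrreducibleZ Δ X) (hsh : ∀ n : ℤ, ∀ x ∈ X, shiftZ n x ∈ X) :
    SpecificationWithGap X (Δ.sup Int.natAbs) := by
  intro u hu v hv N hN
  set q : ℤ := 1 + (u.length + N : ℕ)
  obtain ⟨x₁, hx₁, hu⟩ := mem_language_iff_window.1 hu
  obtain ⟨x₂, hx₂, hv⟩ := (mem_language_iff_window_at hsh q).1 hv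
  have hsep :
      plusNbhdZ (Ico 1 (1 + u.length) : Finset ℤ) Δ ∩ (Ico q (q + v.length) : Finset ℤ) = ∅ := by
    refine Set.eq_empty_iff_forall_notMem.2 fun k ⟨⟨d, hd, hkd⟩, hk⟩ => ?_
    have hdN := (Finset.le_sup (f := Int.natAbs) hd).trans hN
    simp only [coe_Ico, Set.mem_Ico, q] at hkd hk
    omega
  obtain ⟨x, hx, h₁, h₂⟩ := hΔ _ _ hsep x₁ hx₁ x₂ hx₂
  have e₁ : window x 1 u.length = u :=
    (window_eq_window_iff.2 fun k hk hk' => h₁ k (by simp; omega)).trans hu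
  have e₂ : window x q v.length = v :=
    (window_eq_window_iff.2 fun k hk hk' => h₂ k (by simp; omega)).trans hv
  refine ⟨window x (1 + u.length) N, length_window .., mem_language_iff_window.2 ⟨x, hx, ?_⟩⟩
  rw [List.length_append, List.length_append, length_window, window_add, window_add, e₁, e₂]

namespace SpecificationWithGap

variable {A : Type*} {X : Set (ℤ → A)} {N₀ : ℕ}

theorem exists_glue_windows (hL : SpecificationWithGap X N₀)
    (hsh : ∀ n : ℤ, ∀ x ∈ X, shiftZ n x ∈ X) {x₁ x₂ : ℤ → A} (hx₁ : x₁ ∈ X) (hx₂ : x₂ ∈ X)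
    (p : ℤ) (m k n : ℕ) (hk : N₀ ≤ k) :
    ∃ y ∈ X, window y p m = window x₁ p m ∧
      window y (p + (m + k : ℕ)) n = window x₂ (p + (m + k : ℕ)) n := by
  obtain ⟨w, hw, hmem⟩ :=
    hL _ (window_mem_language hsh hx₁ p m) _ (window_mem_language hsh hx₂ _ n) k hk
  obtain ⟨y, hy, hyw⟩ := (mem_language_iff_window_at hsh p).1 hmem
  simp only [List.length_append, length_window, hw, window_add] at hyw
  obtain ⟨hyu, hyv⟩ := List.append_inj hyw (by simp [hw])
  exact ⟨y, hy, (List.append_inj hyu (by simp)).1, hyv⟩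

theorem exists_glue_le_lt (hL : SpecificationWithGap X N₀)
    (hsh : ∀ n : ℤ, ∀ x ∈ X, shiftZ n x ∈ X) {x₁ x₂ : ℤ → A} (hx₁ : x₁ ∈ X) (hx₂ : x₂ ∈ X)
    (a : ℤ) (S : Finset ℤ) :
    ∃ y ∈ X, (∀ n ∈ S, n ≤ a → y n = x₁ n) ∧ (∀ n ∈ S, a + N₀ < n → y n = x₂ n) := by
  set R := S.sup fun n => (n - a).natAbs
  obtain ⟨y, hy, h₁, h₂⟩ := hL.exists_glue_windows hsh hx₁ hx₂ (a - R) (R + 1) N₀ R le_rfl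
  refine ⟨y, hy, fun n hn hna => window_eq_window_iff.1 h₁ n ?_ ?_,
    fun n hn hna => window_eq_window_iff.1 h₂ n ?_ ?_⟩ <;>
  · have := Finset.le_sup (f := fun n => (n - a).natAbs) hn
    push_cast
    omega

theorem exists_glue_of_separated (hL : SpecificationWithGap X N₀)
    (hsh : ∀ n : ℤ, ∀ x ∈ X, shiftZ n x ∈ X) {Ω₁ Ω₂ : Finset ℤ}
    (hsep : ∀ m ∈ Ω₁, ∀ n ∈ Ω₂, (N₀ : ℤ) < |m - n|) {x₁ x₂ : ℤ → A} (hx₁ : x₁ ∈ X)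
    (hx₂ : x₂ ∈ X) : ∃ x ∈ X, (∀ n ∈ Ω₁, x n = x₁ n) ∧ (∀ n ∈ Ω₂, x n = x₂ n) := by
  induction hk : #Ω₁ + #Ω₂ using Nat.strong_induction_on generalizing Ω₁ Ω₂ x₁ x₂ with
  | _ k ih =>
  rcases Ω₁.eq_empty_or_nonempty with rfl | h₁
  · exact ⟨x₂, hx₂, by simp, fun _ _ => rfl⟩
  rcases Ω₂.eq_empty_or_nonempty with rfl | h₂
  · exact ⟨x₁, hx₁, fun _ _ => rfl, by simp⟩
  wlog hlt : Ω₁.max' h₁ < Ω₂.max' h₂ generalizing Ω₁ Ω₂ x₁ x₂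
  · have hne : Ω₂.max' h₂ ≠ Ω₁.max' h₁ := by
      intro h
      have := hsep _ (Ω₁.max'_mem h₁) _ (Ω₂.max'_mem h₂)
      rw [h, sub_self, abs_zero] at this
      omega
    obtain ⟨x, hx, hx₂, hx₁⟩ :=
      this (fun m hm n hn => abs_sub_comm m n ▸ hsep n hn m hm) hx₂ hx₁ (by omega) h₂ h₁
        (lt_of_le_of_ne (not_lt.1 hlt) hne)
    exact ⟨x, hx, hx₁, hx₂⟩
  set a := Ω₁.max' h₁
  have hcard : #(Ω₂.filter (· ≤ a)) < #Ω₂ :=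
    card_lt_card (filter_ssubset.2 ⟨_, Ω₂.max'_mem h₂, not_le.2 hlt⟩)
  obtain ⟨y, hy, hy₁, hy₂⟩ := ih _ (by omega) (Ω₂ := Ω₂.filter (· ≤ a))
    (fun m hm n hn => hsep m hm n (mem_of_mem_filter n hn)) hx₁ hx₂ rfl
  obtain ⟨x, hx, hxy, hxx₂⟩ := hL.exists_glue_le_lt hsh hy hx₂ a (Ω₁ ∪ Ω₂)
  refine ⟨x, hx, fun n hn => ?_, fun n hn => ?_⟩
  · rw [hxy n (mem_union_left _ hn) (Ω₁.le_max' n hn), hy₁ n hn]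
  rcases le_or_gt n a with hna | hna
  · rw [hxy n (mem_union_right _ hn) hna, hy₂ n (mem_filter.2 ⟨hn, hna⟩)]
  · have := hsep a (Ω₁.max'_mem h₁) n hn
    rw [abs_sub_comm, abs_of_pos (by omega)] at this
    exact hxx₂ n (mem_union_right _ hn) (by omega)

theorem deltaIrreducibleZ (hL : SpecificationWithGap X N₀)
    (hsh : ∀ n : ℤ, ∀ x ∈ X, shiftZ n x ∈ X) : DeltaIrreducibleZ (Icc (-N₀ : ℤ) N₀) X := by
  intro Ω₁ Ω₂ hdisj x₁ hx₁ x₂ hx₂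
  refine hL.exists_glue_of_separated hsh (fun m hm n hn => ?_) hx₁ hx₂
  by_contra! h
  refine Set.eq_empty_iff_forall_notMem.1 hdisj n ⟨⟨m - n, ?_, by simpa using hm⟩, hn⟩
  rw [abs_le] at h
  simp only [coe_Icc, Set.mem_Icc]
  omega

end SpecificationWithGap

theorem stronglyIrreducibleZ_iff_language_general {A : Type*}
    [TopologicalSpace A]
    (X : Set (ℤ → A)) (hX : IsSubshiftZ X) :
    StronglyIrreducibleZ X ↔
      ∃ N₀ : ℕ, ∀ u ∈ language X, ∀ v ∈ language X, ∀ N : ℕ, N₀ ≤ N →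
        ∃ w : List A, w.length = N ∧ (u ++ w ++ v) ∈ language X := by
  obtain ⟨-, hsh⟩ := hX
  constructor
  · rintro ⟨Δ, hΔ⟩
    exact ⟨_, hΔ.specificationWithGap hsh⟩
  · rintro ⟨N₀, hL⟩
    exact ⟨_, SpecificationWithGap.deltaIrreducibleZ hL hsh⟩

/-- Characterization of strongly irreducible subshifts over `ℤ` via their language. -/
theorem stronglyIrreducibleZ_iff_language {A : Type*} [Fintype A]
    [TopologicalSpace A] [DiscreteTopology A]
    (X : Set (ℤ → A)) (hX : IsSubshiftZ X) :
    StronglyIrreducibleZ X ↔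
      ∃ N₀ : ℕ, ∀ u ∈ language X, ∀ v ∈ language X, ∀ N : ℕ, N₀ ≤ N →
        ∃ w : List A, w.length = N ∧ (u ++ w ++ v) ∈ language X :=
  stronglyIrreducibleZ_iff_language_general X hX
end

section
/- Let A be a finite set and let X ⊆ A^ℤ be a sofic subshift. Then X is strongly irreducible if and only if X is topologically mixing. -/
open Pointwise Filter

/-- A sofic subshift: the set of configurations represented by bi-infinite paths
in a finite `A`-labeled graph. -/
def IsSofic {A : Type*} (X : Set (ℤ → A)) : Prop :=
  ∃ (Q : Type) (_ : Fintype Q) (Edges : Set (Q × A × Q)),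
    X = {x : ℤ → A | ∃ q : ℤ → Q, ∀ n : ℤ, (q n, x n, q (n + 1)) ∈ Edges}

/-- Topological mixing for a subshift of `A^ℤ`. -/
def TopologicallyMixingZ {A : Type*} [TopologicalSpace A] (X : Set (ℤ → A)) : Prop :=
  ∀ U V : Set (ℤ → A), IsOpen U → IsOpen V → (U ∩ X).Nonempty → (V ∩ X).Nonempty →
    ∃ F : Finset ℤ, ∀ n : ℤ, n ∉ F → ((U ∩ X) ∩ (shiftZ n '' (V ∩ X))).Nonempty


/-!
Strong irreducibility implies mixing for every shift-invariant set: two cylinders are realized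
together as soon as their translates are `Δ`-apart, which excludes only finitely many shifts.

Conversely, present `X` by a finite labelled graph. For a point `x`, the set of states that can
sit at the origin under a configuration agreeing with `x` on `[-k, k)` shrinks as `k` grows,
hence stabilises. Mixing connects any two stable sets by a path of every large length, and as
there are only finitely many pairs of stable sets, a single length `N` serves all points and all
windows. Splicing paths through such a connector glues any two points across a gap of `N` sites;
gluing finitely many far-apart blocks one at a time gives `[-N, N]`-irreducibility.
-/

section Shift

variable {α : Type*}

@[simp]
lemma shiftZ_apply (n : ℤ) (x : ℤ → α) (m : ℤ) : shiftZ n x m = x (m - n) := rfl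

@[simp]
lemma shiftZ_neg_shiftZ (n : ℤ) (x : ℤ → α) : shiftZ (-n) (shiftZ n x) = x := by
  funext m; simp

@[simp]
lemma shiftZ_shiftZ_neg (n : ℤ) (x : ℤ → α) : shiftZ n (shiftZ (-n) x) = x := by
  simpa using shiftZ_neg_shiftZ (-n) x

end Shift

section Cylinder

variable {A : Type*}

def cylinder (x : ℤ → A) (W : Finset ℤ) : Set (ℤ → A) := (W : Set ℤ).pi fun m => {x m}

lemma mem_cylinder {x z : ℤ → A} {W : Finset ℤ} : z ∈ cylinder x W ↔ ∀ m ∈ W, z m = x m := by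
  simp [cylinder]

lemma isOpen_cylinder [TopologicalSpace A] [DiscreteTopology A] (x : ℤ → A) (W : Finset ℤ) :
    IsOpen (cylinder x W) :=
  isOpen_set_pi W.finite_toSet fun _ _ => isOpen_discrete _

lemma exists_cylinder_subset [TopologicalSpace A] {U : Set (ℤ → A)} (hU : IsOpen U) {x : ℤ → A}
    (hx : x ∈ U) : ∃ W : Finset ℤ, cylinder x W ⊆ U := by
  obtain ⟨W, u, hu, hWu⟩ := isOpen_pi_iff.mp hU x hx
  refine ⟨W, subset_trans (Set.pi_mono fun m hm => ?_) hWu⟩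
  simpa using (hu m hm).2

end Cylinder

lemma TopologicallyMixingZ.eventually_nonempty {A : Type*} [TopologicalSpace A]
    {X : Set (ℤ → A)} (hmix : TopologicallyMixingZ X) {U V : Set (ℤ → A)} (hU : IsOpen U)
    (hV : IsOpen V) (hUX : (U ∩ X).Nonempty) (hVX : (V ∩ X).Nonempty) :
    ∀ᶠ n in atTop, ((U ∩ X) ∩ shiftZ n '' (V ∩ X)).Nonempty := by
  obtain ⟨F, hF⟩ := hmix U V hU hV hUX hVX
  refine atTop_le_cofinite (eventually_cofinite.2 (F.finite_toSet.subset fun n hn => ?_))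
  by_contra hnF
  exact hn (hF n hnF)

lemma StronglyIrreducibleZ.topologicallyMixingZ {A : Type*} [TopologicalSpace A]
    {X : Set (ℤ → A)} (hinv : ∀ n : ℤ, ∀ x ∈ X, shiftZ n x ∈ X) (h : StronglyIrreducibleZ X) :
    TopologicallyMixingZ X := by
  classical
  obtain ⟨Δ, hΔ⟩ := h
  rintro U V hU hV ⟨x, hxU, hxX⟩ ⟨y, hyV, hyX⟩
  obtain ⟨Ω₁, hΩ₁⟩ := exists_cylinder_subset hU hxU
  obtain ⟨Ω₂, hΩ₂⟩ := exists_cylinder_subset hV hyV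
  refine ⟨Ω₁ - Δ - Ω₂, fun n hn => ?_⟩
  have hsep : plusNbhdZ Ω₁ Δ ∩ ↑(Ω₂.image (· + n)) = ∅ := by
    refine Set.eq_empty_of_forall_notMem ?_
    rintro _ ⟨⟨d, hd, hmd⟩, hm⟩
    obtain ⟨ω₂, hω₂, rfl⟩ := Finset.mem_image.mp hm
    refine hn ?_
    simpa using Finset.sub_mem_sub (Finset.sub_mem_sub hmd hd) hω₂
  obtain ⟨z, hzX, hzx, hzy⟩ := hΔ Ω₁ (Ω₂.image (· + n)) hsep x hxX (shiftZ n y) (hinv n y hyX)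
  refine ⟨z, ⟨hΩ₁ (mem_cylinder.2 hzx), hzX⟩, shiftZ (-n) z,
    ⟨hΩ₂ (mem_cylinder.2 ?_), hinv _ z hzX⟩, shiftZ_shiftZ_neg n z⟩
  intro m hm
  simpa using hzy (m + n) (Finset.mem_image_of_mem _ hm)

section GraphShift

variable {A Q : Type*} {E : Set (Q × A × Q)}

def IsLabeledPath (E : Set (Q × A × Q)) (q : ℤ → Q) (x : ℤ → A) : Prop :=
  ∀ n, (q n, x n, q (n + 1)) ∈ E

def graphShift (E : Set (Q × A × Q)) : Set (ℤ → A) := {x | ∃ q, IsLabeledPath E q x}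

lemma IsLabeledPath.shiftZ {q : ℤ → Q} {x : ℤ → A} (h : IsLabeledPath E q x) (n : ℤ) :
    IsLabeledPath E (shiftZ n q) (shiftZ n x) := by
  intro m
  simpa [sub_add_eq_add_sub] using h (m - n)

lemma shiftZ_mem_graphShift {x : ℤ → A} (hx : x ∈ graphShift E) (n : ℤ) :
    shiftZ n x ∈ graphShift E :=
  let ⟨_, hq⟩ := hx
  ⟨_, hq.shiftZ n⟩

def splice {α : Type*} (t : ℤ) (f g : ℤ → α) : ℤ → α := fun n => if n < t then f n else g n

lemma IsLabeledPath.splice {q q' : ℤ → Q} {x x' : ℤ → A} (h : IsLabeledPath E q x)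
    (h' : IsLabeledPath E q' x') {t : ℤ} (ht : q t = q' t) :
    IsLabeledPath E (splice t q q') (splice t x x') := by
  intro n
  simp only [_root_.splice]
  split_ifs with h₁ h₂ h₂
  · exact h n
  · obtain rfl : n + 1 = t := by omega
    exact ht ▸ h n
  · omega
  · exact h' n

def Connects (E : Set (Q × A × Q)) (n : ℤ) (S T : Set Q) : Prop :=
  ∃ q x, IsLabeledPath E q x ∧ q 0 ∈ S ∧ q n ∈ T

lemma Connects.mono {n : ℤ} {S S' T T' : Set Q} (h : Connects E n S T) (hS : S ⊆ S')
    (hT : T ⊆ T') : Connects E n S' T' :=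
  let ⟨q, x, hqx, h0, hn⟩ := h
  ⟨q, x, hqx, hS h0, hT hn⟩

def cylinderStates (E : Set (Q × A × Q)) (x : ℤ → A) (k : ℕ) : Set Q :=
  {s | ∃ q z, IsLabeledPath E q z ∧ z ∈ cylinder x (Finset.Ico (-k : ℤ) k) ∧ q 0 = s}

lemma cylinderStates_antitone (x : ℤ → A) : Antitone (cylinderStates E x) := by
  rintro k l hkl s ⟨q, z, hqz, hz, rfl⟩
  refine ⟨q, z, hqz, mem_cylinder.2 fun m hm => mem_cylinder.1 hz m ?_, rfl⟩
  simp only [Finset.mem_Ico] at hm ⊢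
  omega

lemma exists_forall_cylinderStates_subset [Finite Q] (x : ℤ → A) :
    ∃ k₀, ∀ k, cylinderStates E x k₀ ⊆ cylinderStates E x k := by
  obtain ⟨k₀, hk₀⟩ := WellFoundedLT.antitone_chain_condition (cylinderStates_antitone (E := E) x)
  refine ⟨k₀, fun k => ?_⟩
  rcases le_total k k₀ with hk | hk
  · exact cylinderStates_antitone x hk
  · exact (hk₀ k hk).le

lemma eventually_connects_cylinderStates [TopologicalSpace A] [DiscreteTopology A]
    (hmix : TopologicallyMixingZ (graphShift E)) {x y : ℤ → A} (hx : x ∈ graphShift E)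
    (hy : y ∈ graphShift E) (k : ℕ) :
    ∀ᶠ n in atTop, Connects E n (cylinderStates E x k) (cylinderStates E y k) := by
  filter_upwards [hmix.eventually_nonempty (isOpen_cylinder x (Finset.Ico (-k : ℤ) k))
    (isOpen_cylinder y (Finset.Ico (-k : ℤ) k)) ⟨x, mem_cylinder.2 fun _ _ => rfl, hx⟩
    ⟨y, mem_cylinder.2 fun _ _ => rfl, hy⟩] with n hn
  obtain ⟨z, ⟨hzU, q, hq⟩, w, ⟨hwV, -⟩, rfl⟩ := hn
  refine ⟨q, _, hq, ⟨q, _, hq, hzU, rfl⟩, shiftZ (-n) q, w, ?_, hwV, by simp⟩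
  simpa using hq.shiftZ (-n)

lemma exists_connects_cylinderStates [Finite Q] [TopologicalSpace A] [DiscreteTopology A]
    (hmix : TopologicallyMixingZ (graphShift E)) :
    ∃ n : ℤ, 0 ≤ n ∧ ∀ x ∈ graphShift E, ∀ y ∈ graphShift E, ∀ k,
      Connects E n (cylinderStates E x k) (cylinderStates E y k) := by
  choose k₀ hk₀ using exists_forall_cylinderStates_subset (E := E)
  set S := fun x => cylinderStates E x (k₀ x)
  have hpair : ∀ P : Set Q × Set Q, ∀ᶠ n in atTop, ∀ x ∈ graphShift E, ∀ y ∈ graphShift E,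
      S x = P.1 → S y = P.2 → Connects E n P.1 P.2 := by
    rintro ⟨P, F⟩
    by_cases hPF : ∃ x ∈ graphShift E, ∃ y ∈ graphShift E, S x = P ∧ S y = F
    · obtain ⟨x, hx, y, hy, rfl, rfl⟩ := hPF
      filter_upwards [eventually_connects_cylinderStates hmix hx hy (max (k₀ x) (k₀ y))]
        with n hn _ _ _ _ _ _
      exact hn.mono (cylinderStates_antitone x (le_max_left _ _))
        (cylinderStates_antitone y (le_max_right _ _))
    · exact Eventually.of_forall fun n x hx y hy hxP hyF => absurd ⟨x, hx, y, hy, hxP, hyF⟩ hPF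
  obtain ⟨n, hS, hn⟩ := ((eventually_all.2 hpair).and (eventually_ge_atTop 0)).exists
  exact ⟨n, hn, fun x hx y hy k =>
    (hS (S x, S y) x hx y hy rfl rfl).mono (hk₀ x k) (hk₀ y k)⟩

lemma Connects.exists_glue {x y : ℤ → A} {n : ℤ} {k : ℕ}
    (h : Connects E n (cylinderStates E x k) (cylinderStates E y k)) (hn : 0 ≤ n) :
    ∃ z ∈ graphShift E, (∀ m : ℤ, -(k : ℤ) ≤ m → m < 0 → z m = x m) ∧
      (∀ m : ℤ, 0 ≤ m → m < k → z (m + n) = y m) := by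
  obtain ⟨q, c, hqc, ⟨q₁, z₁, h₁, hz₁, hq₁⟩, ⟨q₂, z₂, h₂, hz₂, hq₂⟩⟩ := h
  have hmid : IsLabeledPath E (splice n q (shiftZ n q₂)) (splice n c (shiftZ n z₂)) :=
    hqc.splice (h₂.shiftZ n) (by simp [hq₂])
  refine ⟨_, ⟨_, h₁.splice (t := 0) hmid ?_⟩, fun m hm₁ hm₂ => ?_, fun m hm₁ hm₂ => ?_⟩
  · simp only [splice]
    split_ifs
    · exact hq₁
    · obtain rfl : n = 0 := by omega
      simp [hq₁, hq₂]
  · simp only [splice, if_pos hm₂]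
    exact (mem_cylinder.1 hz₁) m (by simp; omega)
  · simp only [splice, if_neg (show ¬ m + n < 0 by omega), if_neg (show ¬ m + n < n by omega),
      shiftZ_apply, add_sub_cancel_right]
    exact (mem_cylinder.1 hz₂) m (by simp; omega)

end GraphShift

def GluesAcrossGap {A : Type*} (X : Set (ℤ → A)) (N : ℕ) : Prop :=
  ∀ x ∈ X, ∀ y ∈ X, ∀ (a : ℤ) (k : ℕ), ∃ z ∈ X,
    (∀ m : ℤ, a - k ≤ m → m < a → z m = x m) ∧ (∀ m : ℤ, a + N ≤ m → m < a + N + k → z m = y m)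

lemma exists_gluesAcrossGap_graphShift {A Q : Type*} [Finite Q] [TopologicalSpace A]
    [DiscreteTopology A] {E : Set (Q × A × Q)} (hmix : TopologicallyMixingZ (graphShift E)) :
    ∃ N, GluesAcrossGap (graphShift E) N := by
  obtain ⟨n, hn0, hconn⟩ := exists_connects_cylinderStates hmix
  refine ⟨n.toNat, fun x hx y hy a k => ?_⟩
  have hx' := shiftZ_mem_graphShift hx (-a)
  have hy' := shiftZ_mem_graphShift hy (-(a + n))
  obtain ⟨z, hz, hzx, hzy⟩ := (hconn _ hx' _ hy' k).exists_glue hn0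
  refine ⟨shiftZ a z, shiftZ_mem_graphShift hz a, fun m hm₁ hm₂ => ?_, fun m hm₁ hm₂ => ?_⟩
  · simpa using hzx (m - a) (by omega) (by omega)
  · have := hzy (m - a - n) (by omega) (by omega)
    simp only [shiftZ_apply, sub_add_cancel] at this ⊢
    rwa [show m - a - n - -(a + n) = m by ring] at this

lemma GluesAcrossGap.exists_eq_left_eq_right {A : Type*} {X : Set (ℤ → A)} {N : ℕ}
    (hX : GluesAcrossGap X N) {x y : ℤ → A} (hx : x ∈ X) (hy : y ∈ X) (Ω : Finset ℤ) (t : ℤ)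
    (hΩ : ∀ ω ∈ Ω, t < ω → t + N < ω) :
    ∃ z ∈ X, ∀ ω ∈ Ω, (ω ≤ t → z ω = x ω) ∧ (t < ω → z ω = y ω) := by
  obtain ⟨lo, hlo⟩ := Ω.bddBelow
  obtain ⟨hi, hhi⟩ := Ω.bddAbove
  obtain ⟨z, hz, hzx, hzy⟩ := hX x hx y hy (t + 1) ((t + 1 - lo).toNat + (hi - t).toNat)
  refine ⟨z, hz, fun ω hω => ⟨fun h => hzx ω ?_ (by omega), fun h => hzy ω ?_ ?_⟩⟩
  · have := hlo hω; omega
  · have := hΩ ω hω h; omega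
  · have := hhi hω; omega

/-- Induct on the rightmost site `a`: everything right of the last site `t` whose pattern differs
from that of `a` lies beyond the gap, so one gluing step at `t` suffices. -/
lemma GluesAcrossGap.exists_forall_eq {A : Type*} {X : Set (ℤ → A)} {N : ℕ}
    (hX : GluesAcrossGap X N) (hne : X.Nonempty) (Ω : Finset ℤ) {ξ : ℤ → ℤ → A}
    (hξ : ∀ ω ∈ Ω, ξ ω ∈ X)
    (hclose : ∀ ω ∈ Ω, ∀ ω' ∈ Ω, ω ≤ ω' → ω' ≤ ω + N → ξ ω = ξ ω') :
    ∃ z ∈ X, ∀ ω ∈ Ω, z ω = ξ ω ω := by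
  classical
  induction Ω using Finset.induction_on_max with
  | empty => exact hne.imp fun z hz => ⟨hz, by simp⟩
  | insert a s has ih =>
    obtain ⟨w, hw, hws⟩ := ih (fun ω hω => hξ ω (Finset.mem_insert_of_mem hω))
      fun ω hω ω' hω' => hclose ω (Finset.mem_insert_of_mem hω) ω' (Finset.mem_insert_of_mem hω')
    have hξa := hξ a (Finset.mem_insert_self a s)
    set D := s.filter (ξ · ≠ ξ a)
    have hD : ∀ ω ∈ insert a s, ω ∉ D → ξ ω = ξ a := by
      intro ω hω hωD
      rcases Finset.mem_insert.1 hω with rfl | hω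
      · rfl
      · by_contra h
        exact hωD (Finset.mem_filter.2 ⟨hω, h⟩)
    rcases D.eq_empty_or_nonempty with hD₀ | hD₀
    · exact ⟨ξ a, hξa, fun ω hω => by rw [hD ω hω (by simp [hD₀])]⟩
    set t := D.max' hD₀
    obtain ⟨hts, hta⟩ := Finset.mem_filter.1 (D.max'_mem hD₀)
    have hright : ∀ ω ∈ insert a s, t < ω → ξ ω = ξ a := fun ω hω htω =>
      hD ω hω fun hωD => (D.le_max' ω hωD).not_gt htω
    obtain ⟨z, hz, hzwa⟩ := hX.exists_eq_left_eq_right hw hξa (insert a s) t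
      fun ω hω htω => lt_of_not_ge fun hle =>
        hta ((hclose t (Finset.mem_insert_of_mem hts) ω hω htω.le hle).trans (hright ω hω htω))
    refine ⟨z, hz, fun ω hω => ?_⟩
    rcases le_or_gt ω t with h | h
    · have hωs : ω ∈ s := (Finset.mem_insert.1 hω).resolve_left (by have := has t hts; omega)
      rw [(hzwa ω hω).1 h, hws ω hωs]
    · rw [(hzwa ω hω).2 h, hright ω hω h]

lemma GluesAcrossGap.deltaIrreducibleZ {A : Type*} {X : Set (ℤ → A)} {N : ℕ}
    (hX : GluesAcrossGap X N) : DeltaIrreducibleZ (Finset.Icc (-N : ℤ) N) X := by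
  classical
  intro Ω₁ Ω₂ hsep x₁ hx₁ x₂ hx₂
  have hfar : ∀ ω₁ ∈ Ω₁, ∀ ω₂ ∈ Ω₂, N < |ω₁ - ω₂| := by
    intro ω₁ hω₁ ω₂ hω₂
    by_contra hle
    refine Set.eq_empty_iff_forall_notMem.1 hsep ω₂ ⟨⟨ω₁ - ω₂, ?_, by simpa using hω₁⟩, hω₂⟩
    simp only [Finset.coe_Icc, Set.mem_Icc]
    constructor <;> linarith [neg_abs_le (ω₁ - ω₂), le_abs_self (ω₁ - ω₂)]
  set ξ : ℤ → ℤ → A := fun ω => if ω ∈ Ω₁ then x₁ else x₂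
  have hclose : ∀ ω ∈ Ω₁ ∪ Ω₂, ∀ ω' ∈ Ω₁ ∪ Ω₂, ω ≤ ω' → ω' ≤ ω + N → ξ ω = ξ ω' := by
    intro ω hω ω' hω' hωω' hω'N
    have hle : |ω - ω'| ≤ N := abs_le.2 ⟨by linarith, by linarith⟩
    have := fun h₁ h₂ => (hfar ω h₁ ω' h₂).not_ge hle
    have := fun h₁ h₂ => (hfar ω' h₁ ω h₂).not_ge (abs_sub_comm ω ω' ▸ hle)
    simp only [Finset.mem_union] at hω hω'
    simp only [ξ]
    split_ifs <;> tauto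
  obtain ⟨z, hz, hzξ⟩ := hX.exists_forall_eq ⟨x₁, hx₁⟩ (Ω₁ ∪ Ω₂)
    (fun ω _ => by simp only [ξ]; split_ifs <;> assumption) hclose
  refine ⟨z, hz, fun ω hω => by simpa [ξ, hω] using hzξ ω (Finset.mem_union_left _ hω),
    fun ω hω => ?_⟩
  have hω₁ : ω ∉ Ω₁ := fun h => absurd (hfar ω h ω hω) (by simp)
  simpa [ξ, hω₁] using hzξ ω (Finset.mem_union_right _ hω)

theorem sofic_stronglyIrreducible_iff_mixing_general {A : Type*}
    [TopologicalSpace A] [DiscreteTopology A]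
    (X : Set (ℤ → A)) (hsofic : IsSofic X) :
    StronglyIrreducibleZ X ↔ TopologicallyMixingZ X := by
  obtain ⟨Q, _, E, rfl⟩ := hsofic
  refine ⟨StronglyIrreducibleZ.topologicallyMixingZ fun n x hx => shiftZ_mem_graphShift hx n,
    fun hmix => ?_⟩
  obtain ⟨N, hN⟩ := exists_gluesAcrossGap_graphShift (E := E) hmix
  exact ⟨_, hN.deltaIrreducibleZ⟩

/-- A sofic subshift over `ℤ` is strongly irreducible iff it is topologically mixing. -/
theorem sofic_stronglyIrreducible_iff_mixing {A : Type*} [Fintype A]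
    [TopologicalSpace A] [DiscreteTopology A]
    (X : Set (ℤ → A)) (hX : IsSubshiftZ X) (hsofic : IsSofic X) :
    StronglyIrreducibleZ X ↔ TopologicallyMixingZ X :=
  sofic_stronglyIrreducible_iff_mixing_general X hsofic
end

section
/- Let G be an amenable group with Følner net F = (F_j)_{j∈J}, let A and B be finite sets, and let τ : X → Y be a cellular automaton between subshifts X ⊆ A^G and Y ⊆ B^G. Then for every subset Z ⊆ X one has ent_F(τ(Z)) ≤ ent_F(Z). -/
open Pointwise Filter

variable {G : Type*} [Group G]

/-- The shift action of `G` on configurations: `(g • x)(h) = x(g⁻¹h)`. -/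
def shift {A : Type*} (g : G) (x : G → A) : G → A := fun h => x (g⁻¹ * h)

/-- A subshift: a closed, shift-invariant subset of `A^G` (prodiscrete topology). -/
def IsSubshift {A : Type*} [TopologicalSpace A] (X : Set (G → A)) : Prop :=
  IsClosed X ∧ ∀ g : G, ∀ x ∈ X, shift g x ∈ X

/-- The `Δ`-neighborhood `Ω^{+Δ} = ΩΔ⁻¹ = {g : gΔ ∩ Ω ≠ ∅}`. -/
def plusNbhd (Ω Δ : Set G) : Set G := {g : G | ∃ d ∈ Δ, g * d ∈ Ω}

/-- `Δ`-irreducibility of a subshift. -/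
def DeltaIrreducible {A : Type*} (Δ : Finset G) (X : Set (G → A)) : Prop :=
  ∀ Ω₁ Ω₂ : Finset G,
    plusNbhd (Ω₁ : Set G) (Δ : Set G) ∩ (Ω₂ : Set G) = ∅ →
    ∀ x₁ ∈ X, ∀ x₂ ∈ X,
      ∃ x ∈ X, (∀ g ∈ Ω₁, x g = x₁ g) ∧ (∀ g ∈ Ω₂, x g = x₂ g)

/-- Strong irreducibility: `Δ`-irreducible for some finite `Δ ⊆ G`. -/
def StronglyIrreducible {A : Type*} (X : Set (G → A)) : Prop :=
  ∃ Δ : Finset G, DeltaIrreducible Δ X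

/-- A cellular automaton between subshifts `X ⊆ A^G` and `Y ⊆ B^G`:
a map that sends `X` into `Y`, is continuous on `X`, and is `G`-equivariant on `X`. -/
def IsCellularAutomaton {A B : Type*} [TopologicalSpace A] [TopologicalSpace B]
    (X : Set (G → A)) (Y : Set (G → B)) (τ : (G → A) → (G → B)) : Prop :=
  Set.MapsTo τ X Y ∧ ContinuousOn τ X ∧ ∀ g : G, ∀ x ∈ X, τ (shift g x) = shift g (τ x)

/-- Pre-injectivity of a map on a subshift `X`. -/
def PreInjective {A B : Type*} (X : Set (G → A)) (τ : (G → A) → (G → B)) : Prop :=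
  ∀ x₁ ∈ X, ∀ x₂ ∈ X, {g : G | x₁ g ≠ x₂ g}.Finite → τ x₁ = τ x₂ → x₁ = x₂

/-- A Følner net for `G`, indexed by a directed preorder `J`. -/
def IsFolnerNet {J : Type*} [Preorder J] (F : J → Finset G) : Prop :=
  (∀ j, (F j).Nonempty) ∧
  ∀ E : Finset G,
    Tendsto (fun j => ((plusNbhd (F j : Set G) (E : Set G) \ (F j : Set G)).ncard : ℝ) /
        ((F j).card : ℝ)) atTop (nhds 0)

/-- The entropy of a subset `X ⊆ A^G` with respect to a Følner net `F`. -/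
noncomputable def entropy {J A : Type*} [Preorder J] (F : J → Finset G) (X : Set (G → A)) : ℝ :=
  limsup (fun j => Real.log (((Set.restrict (F j : Set G)) '' X).ncard : ℝ) / ((F j).card : ℝ))
    atTop

/-- Topological mixing for a subshift (open subsets of `X` are traces of ambient opens). -/
def TopologicallyMixing {A : Type*} [TopologicalSpace A] (X : Set (G → A)) : Prop :=
  ∀ U V : Set (G → A), IsOpen U → IsOpen V → (U ∩ X).Nonempty → (V ∩ X).Nonempty →
    ∃ F : Finset G, ∀ g : G, g ∉ F → ((U ∩ X) ∩ (shift g '' (V ∩ X))).Nonempty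

/-- An `(E,E')`-tiling. -/
def IsTiling (E E' T : Set G) : Prop :=
  T.PairwiseDisjoint (fun g => g • E) ∧ (⋃ g ∈ T, g • E') = Set.univ

/-!
A cellular automaton has a finite memory set `M`: the value of `τ x` at `g` only depends on
`x` restricted to `gM`. Hence a pattern of `τ(Z)` on `F` is determined by a pattern of `Z` on
`FM`, and `|Z_{FM}| ≤ |Z_F| · |A|^{|FM \ F|}`. Dividing the logarithms by `|F|`, the error term
`|FM \ F| / |F| · log |A|` tends to `0` along a Følner net.
-/

theorem Set.ncard_image_le_ncard_image_of_factors {α β γ : Type*} (g : α → β) (h : α → γ)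
    {Z : Set α} (hZ : (h '' Z).Finite) (hgh : ∀ x ∈ Z, ∀ y ∈ Z, h x = h y → g x = g y) :
    (g '' Z).ncard ≤ (h '' Z).ncard := by
  rcases Z.eq_empty_or_nonempty with rfl | ⟨x₀, -⟩
  · simp
  have : Nonempty α := ⟨x₀⟩
  have hsub : g '' Z ⊆ (g ∘ Function.invFunOn h Z) '' (h '' Z) := by
    rintro _ ⟨x, hx, rfl⟩
    exact ⟨h x, ⟨x, hx, rfl⟩,
      hgh _ (Function.invFunOn_apply_mem hx) x hx (Function.invFunOn_apply_eq hx)⟩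
  exact (Set.ncard_le_ncard hsub (hZ.image _)).trans (Set.ncard_image_le hZ)

theorem ncard_restrict_image_le_mul_pow {ι A : Type*} [DecidableEq ι] [Fintype A]
    (Z : Set (ι → A)) (Ω Ω' : Finset ι) :
    ((Ω' : Set ι).domRestrict '' Z).ncard ≤
      ((Ω : Set ι).domRestrict '' Z).ncard * Fintype.card A ^ (Ω' \ Ω).card := by
  let h : (ι → A) → (↥(Ω : Set ι) → A) × (↥((Ω' \ Ω : Finset ι) : Set ι) → A) :=
    fun z => ((Ω : Set ι).domRestrict z, ((Ω' \ Ω : Finset ι) : Set ι).domRestrict z)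
  have hsub : h '' Z ⊆ ((Ω : Set ι).domRestrict '' Z) ×ˢ Set.univ := by
    rintro _ ⟨z, hz, rfl⟩
    exact ⟨⟨z, hz, rfl⟩, trivial⟩
  calc ((Ω' : Set ι).domRestrict '' Z).ncard
      ≤ (h '' Z).ncard := by
        refine Set.ncard_image_le_ncard_image_of_factors _ h (Set.toFinite _) ?_
        intro x _ y _ hxy
        funext ⟨i, hi⟩
        by_cases hiΩ : i ∈ Ω
        · exact congrFun (congrArg Prod.fst hxy) ⟨i, hiΩ⟩
        · exact congrFun (congrArg Prod.snd hxy) ⟨i, by simp [hiΩ, Finset.mem_coe.1 hi]⟩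
    _ ≤ (((Ω : Set ι).domRestrict '' Z) ×ˢ
          (Set.univ : Set (↥((Ω' \ Ω : Finset ι) : Set ι) → A))).ncard :=
        Set.ncard_le_ncard hsub (Set.toFinite _)
    _ = ((Ω : Set ι).domRestrict '' Z).ncard * Fintype.card A ^ (Ω' \ Ω).card := by
        rw [Set.ncard_prod, Set.ncard_univ, Nat.card_fun, Nat.card_eq_fintype_card,
          Nat.card_coe_set_eq, Set.ncard_coe_finset]

theorem ncard_restrict_image_le_pow {ι A : Type*} [Fintype A] (Z : Set (ι → A)) (Ω : Finset ι) :
    ((Ω : Set ι).domRestrict '' Z).ncard ≤ Fintype.card A ^ Ω.card := by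
  simpa [Nat.card_fun] using Set.ncard_le_card ((Ω : Set ι).domRestrict '' Z)

theorem Real.log_natCast_le_log_add_mul_log {t r n d : ℕ} (h : t ≤ r * n ^ d) :
    Real.log t ≤ Real.log r + d * Real.log n := by
  rcases Nat.eq_zero_or_pos t with rfl | ht
  · rw [Nat.cast_zero, Real.log_zero]
    exact add_nonneg (Real.log_natCast_nonneg r)
      (mul_nonneg (Nat.cast_nonneg d) (Real.log_natCast_nonneg n))
  have hr : 0 < r := Nat.pos_of_mul_pos_right (ht.trans_le h)
  have hnd : 0 < n ^ d := Nat.pos_of_mul_pos_left (ht.trans_le h)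
  calc Real.log t ≤ Real.log ((r * n ^ d : ℕ) : ℝ) :=
        Real.log_le_log (by exact_mod_cast ht) (by exact_mod_cast h)
    _ = Real.log r + d * Real.log n := by
        push_cast
        rw [Real.log_mul (by positivity) (by exact_mod_cast hnd.ne'), Real.log_pow]

theorem log_ncard_restrict_div_card_nonneg {ι A : Type*} (Z : Set (ι → A)) (Ω : Finset ι) :
    0 ≤ Real.log ((Ω : Set ι).domRestrict '' Z).ncard / Ω.card :=
  div_nonneg (Real.log_natCast_nonneg _) (Nat.cast_nonneg _)

theorem log_ncard_restrict_div_card_le {ι A : Type*} [Fintype A] (Z : Set (ι → A))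
    {Ω : Finset ι} (hΩ : Ω.Nonempty) :
    Real.log ((Ω : Set ι).domRestrict '' Z).ncard / Ω.card ≤ Real.log (Fintype.card A) := by
  rw [div_le_iff₀ (by exact_mod_cast hΩ.card_pos), mul_comm]
  simpa using Real.log_natCast_le_log_add_mul_log (r := 1)
    (by simpa using ncard_restrict_image_le_pow Z Ω)

theorem limsup_le_limsup_of_le_add_of_tendsto_zero {ι : Type*} {f : Filter ι} [f.NeBot]
    {a b c : ι → ℝ} (habc : ∀ᶠ i in f, a i ≤ b i + c i) (hc : Tendsto c f (nhds 0))
    (ha : IsCoboundedUnder (· ≤ ·) f a) (hb : IsBoundedUnder (· ≤ ·) f b)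
    (hb' : IsBoundedUnder (· ≥ ·) f b) :
    limsup a f ≤ limsup b f :=
  calc limsup a f ≤ limsup (b + c) f :=
        limsup_le_limsup habc ha (isBoundedUnder_le_add hb hc.isBoundedUnder_le)
    _ ≤ limsup b f + limsup c f :=
        limsup_add_le hb' hb hc.isCoboundedUnder_le hc.isBoundedUnder_le
    _ = limsup b f := by rw [hc.limsup_eq, add_zero]

theorem IsCompact.exists_finset_eqOn_imp_eq {ι A B : Type*}
    [TopologicalSpace A] [DiscreteTopology A] [TopologicalSpace B] [DiscreteTopology B]
    {X : Set (ι → A)} (hX : IsCompact X) {φ : (ι → A) → B} (hφ : ContinuousOn φ X) :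
    ∃ S : Finset ι, ∀ x ∈ X, ∀ y ∈ X, Set.EqOn x y S → φ x = φ y := by
  have hlocal : ∀ x ∈ X, ∃ S : Finset ι, ∀ y ∈ X, Set.EqOn y x S → φ y = φ x := by
    intro x hx
    obtain ⟨U, hUo, hxU, hU⟩ := mem_nhdsWithin.1 <|
      (hφ x hx).preimage_mem_nhdsWithin ((isOpen_discrete {φ x}).mem_nhds rfl)
    obtain ⟨S, u, hu, hSU⟩ := isOpen_pi_iff.1 hUo x hxU
    refine ⟨S, fun y hy hyx => hU ⟨hSU fun i hi => ?_, hy⟩⟩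
    rw [hyx hi]
    exact (hu i hi).2
  choose! S hS using hlocal
  have hnhds : ∀ x ∈ X, {y | Set.EqOn y x (S x)} ∈ nhds x := by
    intro x _
    have : {y : ι → A | Set.EqOn y x (S x)} = ⋂ i ∈ S x, (fun y => y i) ⁻¹' {x i} := by
      ext y; simp [Set.EqOn]
    rw [this, Finset.iInter_mem_sets]
    exact fun i _ => (continuous_apply i).continuousAt ((isOpen_discrete _).mem_nhds rfl)
  obtain ⟨t, htX, hcover⟩ := hX.elim_nhds_subcover _ hnhds
  classical
  refine ⟨t.biUnion S, fun x hx y hy hxy => ?_⟩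
  obtain ⟨i, hit, hxi⟩ := Set.mem_iUnion₂.1 (hcover hx)
  have hSi : ((S i : Finset ι) : Set ι) ⊆ (t.biUnion S : Finset ι) := by
    intro g hg
    exact Finset.mem_biUnion.2 ⟨i, hit, hg⟩
  have hyi : Set.EqOn y i (S i) := fun g hg => (hxy (hSi hg)).symm.trans (hxi hg)
  rw [hS i (htX i hit) x hx hxi, hS i (htX i hit) y hy hyi]

theorem IsCellularAutomaton.exists_memory_set {A B : Type*} [Finite A]
    [TopologicalSpace A] [DiscreteTopology A] [TopologicalSpace B] [DiscreteTopology B]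
    {X : Set (G → A)} {Y : Set (G → B)} (hX : IsSubshift X) {τ : (G → A) → (G → B)}
    (hτ : IsCellularAutomaton X Y τ) :
    ∃ M : Finset G, ∀ x ∈ X, ∀ y ∈ X, ∀ g : G,
      (∀ m ∈ M, x (g * m) = y (g * m)) → τ x g = τ y g := by
  obtain ⟨M, hM⟩ := hX.1.isCompact.exists_finset_eqOn_imp_eq
    ((continuous_apply 1).comp_continuousOn hτ.2.1)
  refine ⟨M, fun x hx y hy g hxy => ?_⟩
  have key := hM _ (hX.2 g⁻¹ x hx) _ (hX.2 g⁻¹ y hy) fun m hm => by simpa [shift] using hxy m hm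
  simp only [Function.comp_apply, hτ.2.2 g⁻¹ x hx, hτ.2.2 g⁻¹ y hy] at key
  simpa [shift] using key

theorem plusNbhd_inv_eq_mul (Ω Δ : Set G) : plusNbhd Ω Δ⁻¹ = Ω * Δ := by
  ext g
  simp only [plusNbhd, Set.mem_inv, Set.mem_ofPred_eq, Set.mem_mul]
  constructor
  · rintro ⟨d, hd, hgd⟩
    exact ⟨g * d, hgd, d⁻¹, hd, by group⟩
  · rintro ⟨x, hx, m, hm, rfl⟩
    exact ⟨m⁻¹, by simpa using hm, by simpa using hx⟩

theorem IsFolnerNet.tendsto_card_mul_sdiff_div [DecidableEq G] {J : Type*} [Preorder J]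
    {F : J → Finset G} (hF : IsFolnerNet F) (M : Finset G) :
    Tendsto (fun j => (((F j * M) \ F j).card : ℝ) / (F j).card) atTop (nhds 0) := by
  convert hF.2 M⁻¹ using 3 with j
  rw [Finset.coe_inv, plusNbhd_inv_eq_mul, ← Finset.coe_mul, ← Finset.coe_sdiff,
    Set.ncard_coe_finset]

theorem log_ncard_restrict_image_le [DecidableEq G] {A B : Type*} [Fintype A]
    {Z : Set (G → A)} {τ : (G → A) → (G → B)} {M : Finset G}
    (hM : ∀ x ∈ Z, ∀ y ∈ Z, ∀ g : G, (∀ m ∈ M, x (g * m) = y (g * m)) → τ x g = τ y g)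
    (Ω : Finset G) :
    Real.log ((Ω : Set G).domRestrict '' (τ '' Z)).ncard ≤
      Real.log ((Ω : Set G).domRestrict '' Z).ncard +
        ((Ω * M) \ Ω).card * Real.log (Fintype.card A) := by
  refine Real.log_natCast_le_log_add_mul_log (le_trans ?_
    (ncard_restrict_image_le_mul_pow Z Ω (Ω * M)))
  rw [Set.image_image]
  refine Set.ncard_image_le_ncard_image_of_factors _ _ (Set.toFinite _) ?_
  intro x hx y hy hxy
  funext ⟨g, hg⟩
  exact hM x hx y hy g fun m hm =>
    congrFun hxy ⟨g * m, Finset.mul_mem_mul (Finset.mem_coe.1 hg) hm⟩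

theorem entropy_image_le_general {A B : Type*} [Fintype A]
    [TopologicalSpace A] [DiscreteTopology A] [TopologicalSpace B] [DiscreteTopology B]
    {J : Type*} [Nonempty J] [Preorder J] [IsDirected J (· ≤ ·)]
    (F : J → Finset G) (hF : IsFolnerNet F)
    (X : Set (G → A)) (Y : Set (G → B)) (hX : IsSubshift X)
    (τ : (G → A) → (G → B)) (hτ : IsCellularAutomaton X Y τ)
    (Z : Set (G → A)) (hZ : Z ⊆ X) :
    entropy F (τ '' Z) ≤ entropy F Z := by
  classical
  obtain ⟨M, hM⟩ := hτ.exists_memory_set hX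
  refine limsup_le_limsup_of_le_add_of_tendsto_zero
    (c := fun j => (((F j * M) \ F j).card : ℝ) / (F j).card * Real.log (Fintype.card A))
    (Eventually.of_forall fun j => ?_) ?_
    (isBoundedUnder_of ⟨0, fun j => log_ncard_restrict_div_card_nonneg _ _⟩).isCoboundedUnder_le
    (isBoundedUnder_of ⟨_, fun j => log_ncard_restrict_div_card_le Z (hF.1 j)⟩)
    (isBoundedUnder_of ⟨0, fun j => log_ncard_restrict_div_card_nonneg Z (F j)⟩)
  · rw [div_mul_eq_mul_div, ← add_div]
    gcongr
    exact log_ncard_restrict_image_le (fun x hx y hy => hM x (hZ hx) y (hZ hy)) (F j)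
  · simpa using (hF.tendsto_card_mul_sdiff_div M).mul_const (Real.log (Fintype.card A))

/-- Cellular automata do not increase entropy. -/
theorem entropy_image_le {A B : Type*} [Fintype A] [Fintype B]
    [TopologicalSpace A] [DiscreteTopology A] [TopologicalSpace B] [DiscreteTopology B]
    {J : Type*} [Nonempty J] [Preorder J] [IsDirected J (· ≤ ·)]
    (F : J → Finset G) (hF : IsFolnerNet F)
    (X : Set (G → A)) (Y : Set (G → B)) (hX : IsSubshift X) (hY : IsSubshift Y)
    (τ : (G → A) → (G → B)) (hτ : IsCellularAutomaton X Y τ)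
    (Z : Set (G → A)) (hZ : Z ⊆ X) :
    entropy F (τ '' Z) ≤ entropy F Z :=
  entropy_image_le_general F hF X Y hX τ hτ Z hZ
end

section
/- Let G be a group, let E be a nonempty subset of G, and let E' = EE⁻¹ = {ab⁻¹ : a, b ∈ E}. Then G contains an (E, E')-tiling, i.e., there exists T ⊆ G such that the sets gE, g ∈ T, are pairwise disjoint and G = ⋃_{g∈T} gE'. -/
/-!
By Zorn's lemma there is a maximal `T` whose translates `tE`, `t ∈ T`, are pairwise disjoint.
If `g ∉ T`, maximality makes `gE` meet some `tE` with `t ∈ T`, say `ga = tb`, whence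
`g = tba⁻¹ ∈ tEE⁻¹`; and if `g ∈ T`, then `g = gaa⁻¹ ∈ gEE⁻¹` for any `a ∈ E`.
-/

open Pointwise Filter

variable {G : Type*} [Group G]

section PairwiseDisjoint

variable {ι α : Type*} [PartialOrder α] [OrderBot α]

theorem Set.exists_maximal_pairwiseDisjoint (f : ι → α) :
    ∃ T : Set ι, Maximal (fun T => T.PairwiseDisjoint f) T :=
  zorn_subset _ fun c hcT hc =>
    ⟨⋃₀ c, (hc.pairwiseDisjoint_sUnion f).2 hcT, fun _ => Set.subset_sUnion_of_mem⟩

theorem Maximal.exists_not_disjoint_of_notMem {f : ι → α} {T : Set ι}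
    (hT : Maximal (fun T => T.PairwiseDisjoint f) T) {i : ι} (hi : i ∉ T) :
    ∃ j ∈ T, ¬Disjoint (f i) (f j) := by
  by_contra! h
  exact hi (hT.mem_of_prop_insert (Set.pairwiseDisjoint_insert.2 ⟨hT.prop, fun j hj _ => h j hj⟩))

end PairwiseDisjoint

theorem Set.mem_smul_mul_inv_self {E : Set G} (hE : E.Nonempty) (g : G) :
    g ∈ g • (E * E⁻¹) := by
  obtain ⟨a, ha⟩ := hE
  exact ⟨a * a⁻¹, Set.mul_mem_mul ha (Set.inv_mem_inv.2 ha), by simp⟩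

theorem Set.mem_smul_mul_inv_of_not_disjoint {E : Set G} {g t : G}
    (h : ¬Disjoint (g • E) (t • E)) : g ∈ t • (E * E⁻¹) := by
  obtain ⟨_, ⟨a, ha, rfl⟩, b, hb, hba⟩ := Set.not_disjoint_iff.1 h
  refine ⟨b * a⁻¹, Set.mul_mem_mul hb (Set.inv_mem_inv.2 ha), ?_⟩
  simp only [smul_eq_mul] at hba ⊢
  rw [← mul_assoc, hba, mul_inv_cancel_right]

/-- Every group contains an `(E, EE⁻¹)`-tiling, for any nonempty `E ⊆ G`. -/
theorem exists_tiling (E : Set G) (hE : E.Nonempty) :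
    ∃ T : Set G, IsTiling E (E * E⁻¹) T := by
  obtain ⟨T, hT⟩ := Set.exists_maximal_pairwiseDisjoint fun g : G => g • E
  refine ⟨T, hT.prop, Set.eq_univ_of_forall fun g => Set.mem_iUnion₂.2 ?_⟩
  by_cases hg : g ∈ T
  · exact ⟨g, hg, Set.mem_smul_mul_inv_self hE g⟩
  · obtain ⟨t, ht, hgt⟩ := hT.exists_not_disjoint_of_notMem hg
    exact ⟨t, ht, Set.mem_smul_mul_inv_of_not_disjoint hgt⟩
end

section
/- Let G be a group, let A and B be finite sets, and let τ : A^G → B^G be a cellular automaton. Then the image τ(A^G) is a strongly irreducible subshift of B^G. -/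
/-!
A continuous map from the compact space `A^G` to a discrete space depends on finitely many
coordinates, so by equivariance `τ` has a finite memory set `M`: `τ x g` is determined by `x`
on `gM`. Given `τ x₁, τ x₂` and finite `Ω₁, Ω₂` with `Ω₁^{+MM⁻¹} ∩ Ω₂ = ∅`, the configuration
equal to `x₁` on `Ω₁M` and to `x₂` elsewhere is mapped to one agreeing with `τ x₁` on `Ω₁`
and with `τ x₂` on `Ω₂`, since the sets `gM` with `g ∈ Ω₂` avoid `Ω₁M`.
-/

open Pointwise Filter

variable {G : Type*} [Group G]

theorem Continuous.exists_finset_forall_eq_imp_eq {ι A B : Type*} [TopologicalSpace A]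
    [CompactSpace A] [TopologicalSpace B] [DiscreteTopology B]
    {f : (ι → A) → B} (hf : Continuous f) :
    ∃ M : Finset ι, ∀ u v : ι → A, (∀ i ∈ M, u i = v i) → f u = f v := by
  have hfiber (x : ι → A) : ∃ I : Finset ι, ∃ U : ι → Set A,
      x ∈ (I : Set ι).pi U ∧ IsOpen ((I : Set ι).pi U) ∧ (I : Set ι).pi U ⊆ f ⁻¹' {f x} := by
    obtain ⟨I, U, hU, hsub⟩ :=
      isOpen_pi_iff.mp (hf.isOpen_preimage {f x} (isOpen_discrete _)) x rfl
    exact ⟨I, U, fun i hi => (hU i hi).2, isOpen_set_pi I.finite_toSet fun i hi => (hU i hi).1,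
      hsub⟩
  choose I U hxU hUopen hUsub using hfiber
  obtain ⟨t, hcover⟩ := isCompact_univ.elim_finite_subcover _ hUopen
    fun x _ => Set.mem_iUnion.mpr ⟨x, hxU x⟩
  classical
  refine ⟨t.biUnion I, fun u v huv => ?_⟩
  obtain ⟨z, hz, hu⟩ := Set.mem_iUnion₂.mp (hcover (Set.mem_univ u))
  have hv : v ∈ (I z : Set ι).pi (U z) := fun i hi =>
    huv i (Finset.mem_biUnion.mpr ⟨z, hz, hi⟩) ▸ hu i hi
  exact (hUsub z hu).trans (hUsub z hv).symm

def IsMemorySet {A B : Type*} (M : Finset G) (τ : (G → A) → (G → B)) : Prop :=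
  ∀ (g : G) (u v : G → A), (∀ m ∈ M, u (g * m) = v (g * m)) → τ u g = τ v g

section CellularAutomaton

variable {A B : Type*} [TopologicalSpace A] [TopologicalSpace B] {τ : (G → A) → (G → B)}

theorem IsCellularAutomaton.apply_eq_apply_one_shift_inv
    (hτ : IsCellularAutomaton Set.univ Set.univ τ) (x : G → A) (g : G) :
    τ x g = τ (shift g⁻¹ x) 1 := by
  rw [hτ.2.2 g⁻¹ x trivial]
  simp [shift]

theorem IsCellularAutomaton.exists_isMemorySet [CompactSpace A] [DiscreteTopology B]
    (hτ : IsCellularAutomaton Set.univ Set.univ τ) : ∃ M : Finset G, IsMemorySet M τ := by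
  obtain ⟨M, hM⟩ :=
    ((continuous_apply 1).comp (continuousOn_univ.mp hτ.2.1)).exists_finset_forall_eq_imp_eq
  refine ⟨M, fun g u v huv => ?_⟩
  rw [hτ.apply_eq_apply_one_shift_inv u, hτ.apply_eq_apply_one_shift_inv v]
  exact hM _ _ fun m hm => by simpa [shift] using huv m hm

theorem IsCellularAutomaton.isSubshift_range [CompactSpace A] [T2Space B]
    (hτ : IsCellularAutomaton Set.univ Set.univ τ) : IsSubshift (Set.range τ) := by
  refine ⟨isCompact_range (continuousOn_univ.mp hτ.2.1) |>.isClosed, ?_⟩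
  rintro g _ ⟨x, rfl⟩
  exact ⟨shift g x, hτ.2.2 g x trivial⟩

end CellularAutomaton

theorem IsMemorySet.deltaIrreducible_range [DecidableEq G] {A B : Type*}
    {τ : (G → A) → (G → B)} {M : Finset G} (hM : IsMemorySet M τ) :
    DeltaIrreducible (M * M⁻¹) (Set.range τ) := by
  classical
  rintro Ω₁ Ω₂ hdisj _ ⟨x₁, rfl⟩ _ ⟨x₂, rfl⟩
  let x : G → A := fun g => if g ∈ (Ω₁ : Set G) * M then x₁ g else x₂ g
  refine ⟨τ x, ⟨x, rfl⟩, fun g hg => hM g _ _ fun m hm => ?_,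
    fun g hg => hM g _ _ fun m hm => ?_⟩
  · exact if_pos (Set.mul_mem_mul hg hm)
  · refine if_neg ?_
    rintro ⟨ω, hω, m', hm', hgm⟩
    have hΔ : m * m'⁻¹ ∈ M * M⁻¹ := Finset.mul_mem_mul hm (Finset.inv_mem_inv hm')
    have hgΔ : g * (m * m'⁻¹) = ω := by rw [← mul_assoc, ← hgm, mul_inv_cancel_right]
    exact (Set.eq_empty_iff_forall_notMem.mp hdisj) g
      ⟨⟨m * m'⁻¹, by exact_mod_cast hΔ, hgΔ ▸ hω⟩, hg⟩

theorem image_full_shift_stronglyIrreducible_general {A B : Type*} [Fintype A]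
    [TopologicalSpace A] [TopologicalSpace B] [DiscreteTopology B]
    (τ : (G → A) → (G → B))
    (hτ : IsCellularAutomaton (Set.univ : Set (G → A)) (Set.univ : Set (G → B)) τ) :
    IsSubshift (Set.range τ) ∧ StronglyIrreducible (Set.range τ) := by
  classical
  obtain ⟨M, hM⟩ := hτ.exists_isMemorySet
  exact ⟨hτ.isSubshift_range, M * M⁻¹, hM.deltaIrreducible_range⟩

/-- The image of the full shift under a cellular automaton is a strongly
irreducible subshift. -/
theorem image_full_shift_stronglyIrreducible {A B : Type*} [Fintype A] [Fintype B]
    [TopologicalSpace A] [DiscreteTopology A] [TopologicalSpace B] [DiscreteTopology B]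
    (τ : (G → A) → (G → B))
    (hτ : IsCellularAutomaton (Set.univ : Set (G → A)) (Set.univ : Set (G → B)) τ) :
    IsSubshift (Set.range τ) ∧ StronglyIrreducible (Set.range τ) :=
  image_full_shift_stronglyIrreducible_general τ hτ
end

section
/- Let G be a group, let A and B be finite sets, and let X ⊆ A^G and Y ⊆ B^G be conjugate subshifts (i.e., there exists a bijective cellular automaton τ : X → Y). Then X is strongly irreducible if and only if Y is strongly irreducible. -/
open Pointwise Filter

variable {G : Type*} [Group G]

/-!
A cellular automaton `τ` on a subshift `X` has a finite memory set `M`: by compactness of `X`, the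
value `τ x 1` only depends on `x` restricted to `M`, and by equivariance `τ x g` only depends on `x`
restricted to `gM`. Hence if `X` is `Δ`-irreducible then `τ(X)` is `MΔM⁻¹`-irreducible: to glue
patterns of `τ(X)` on `Ω₁` and `Ω₂`, glue patterns of `X` on `Ω₁M` and `Ω₂M`, which are
`Δ`-separated. The inverse of a bijective cellular automaton is again a cellular automaton, since a
continuous injection from a compact space into a Hausdorff space is an embedding.
-/

open Set Function

def IsShiftInvariant {A : Type*} (X : Set (G → A)) : Prop :=
  ∀ g : G, ∀ x ∈ X, shift g x ∈ X

def IsShiftEquivariantOn {A B : Type*} (τ : (G → A) → (G → B)) (X : Set (G → A)) : Prop :=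
  ∀ g : G, ∀ x ∈ X, τ (shift g x) = shift g (τ x)

section MemorySet

variable {ι A C : Type*} [TopologicalSpace A] [TopologicalSpace C] [DiscreteTopology C]
  {φ : (ι → A) → C} {X : Set (ι → A)}

lemma ContinuousWithinAt.exists_finset_eq_of_eqOn {x : ι → A} (h : ContinuousWithinAt φ X x) :
    ∃ I : Finset ι, ∀ x' ∈ X, EqOn x' x I → φ x' = φ x := by
  obtain ⟨U, hUo, hxU, hU⟩ := mem_nhdsWithin.mp (h ((isOpen_discrete {φ x}).mem_nhds rfl))
  obtain ⟨I, u, hu, hIU⟩ := isOpen_pi_iff.mp hUo x hxU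
  exact ⟨I, fun x' hx' hI => hU ⟨hIU fun i hi => (hI hi).symm ▸ (hu i hi).2, hx'⟩⟩

lemma IsCompact.exists_finset_eq_of_eqOn [DiscreteTopology A] (hX : IsCompact X)
    (hφ : ContinuousOn φ X) :
    ∃ M : Finset ι, ∀ x ∈ X, ∀ x' ∈ X, EqOn x x' M → φ x = φ x' := by
  classical
  choose! I hI using fun x hx => (hφ x hx).exists_finset_eq_of_eqOn
  obtain ⟨t, htX, hcover⟩ := hX.elim_nhds_subcover (fun x => (I x : Set ι).pi fun i => {x i})
    fun x _ => (isOpen_set_pi (I x).finite_toSet fun _ _ => isOpen_discrete _).mem_nhds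
      fun _ _ => rfl
  refine ⟨t.sup I, fun x hx x' hx' hxx' => ?_⟩
  obtain ⟨c, hct, hxc⟩ := mem_iUnion₂.mp (hcover hx)
  have hx'c : EqOn x' c (I c) := fun i hi =>
    (hxx' (Finset.mem_sup.mpr ⟨c, hct, hi⟩)).symm.trans (hxc i hi)
  rw [hI c (htX c hct) x hx hxc, hI c (htX c hct) x' hx' hx'c]

end MemorySet

lemma IsShiftEquivariantOn.apply_eq_of_forall_mul_eq {A B : Type*} {τ : (G → A) → (G → B)}
    {X : Set (G → A)} (hτ : IsShiftEquivariantOn τ X) (hX : IsShiftInvariant X) {M : Finset G}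
    (hM : ∀ x ∈ X, ∀ x' ∈ X, EqOn x x' M → τ x 1 = τ x' 1) {x x' : G → A} (hx : x ∈ X)
    (hx' : x' ∈ X) {g : G} (hxx' : ∀ m ∈ M, x (g * m) = x' (g * m)) : τ x g = τ x' g := by
  have h := hM _ (hX g⁻¹ x hx) _ (hX g⁻¹ x' hx') fun m hm => by simpa [shift] using hxx' m hm
  rw [hτ g⁻¹ x hx, hτ g⁻¹ x' hx'] at h
  simpa [shift] using h

lemma plusNbhd_mul_inter_mul_eq_empty {Ω₁ Ω₂ Δ M : Set G}
    (h : plusNbhd Ω₁ (M * Δ * M⁻¹) ∩ Ω₂ = ∅) : plusNbhd (Ω₁ * M) Δ ∩ (Ω₂ * M) = ∅ := by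
  refine eq_empty_iff_forall_notMem.mpr ?_
  rintro _ ⟨⟨d, hd, ω₁, hω₁, m₁, hm₁, hω₁m₁⟩, ω₂, hω₂, m₂, hm₂, rfl⟩
  have hmem : ω₂ ∈ plusNbhd Ω₁ (M * Δ * M⁻¹) ∩ Ω₂ := by
    refine ⟨⟨m₂ * d * m₁⁻¹, mul_mem_mul (mul_mem_mul hm₂ hd) (inv_mem_inv.mpr hm₁), ?_⟩, hω₂⟩
    rwa [← mul_assoc, ← mul_assoc, ← hω₁m₁, mul_inv_cancel_right]
  exact h.subset hmem

lemma DeltaIrreducible.image [DecidableEq G] {A B : Type*} {Δ M : Finset G} {X : Set (G → A)}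
    {τ : (G → A) → (G → B)} (hX : DeltaIrreducible Δ X)
    (hM : ∀ x ∈ X, ∀ x' ∈ X, ∀ g : G, (∀ m ∈ M, x (g * m) = x' (g * m)) → τ x g = τ x' g) :
    DeltaIrreducible (M * Δ * M⁻¹) (τ '' X) := by
  rintro Ω₁ Ω₂ hΩ _ ⟨x₁, hx₁, rfl⟩ _ ⟨x₂, hx₂, rfl⟩
  have hsep : plusNbhd ((Ω₁ * M : Finset G) : Set G) Δ ∩ ((Ω₂ * M : Finset G) : Set G) = ∅ := by
    push_cast at hΩ ⊢
    exact plusNbhd_mul_inter_mul_eq_empty hΩ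
  obtain ⟨x, hx, hxx₁, hxx₂⟩ := hX _ _ hsep x₁ hx₁ x₂ hx₂
  exact ⟨τ x, mem_image_of_mem τ hx,
    fun g hg => hM x hx x₁ hx₁ g fun m hm => hxx₁ _ (Finset.mul_mem_mul hg hm),
    fun g hg => hM x hx x₂ hx₂ g fun m hm => hxx₂ _ (Finset.mul_mem_mul hg hm)⟩

lemma StronglyIrreducible.image {A B : Type*} [TopologicalSpace A] [DiscreteTopology A]
    [TopologicalSpace B] [DiscreteTopology B] {X : Set (G → A)} {τ : (G → A) → (G → B)}
    (hX : StronglyIrreducible X) (hXc : IsCompact X) (hXinv : IsShiftInvariant X)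
    (hcont : ContinuousOn τ X) (hequiv : IsShiftEquivariantOn τ X) :
    StronglyIrreducible (τ '' X) := by
  classical
  obtain ⟨Δ, hΔ⟩ := hX
  obtain ⟨M, hM⟩ := hXc.exists_finset_eq_of_eqOn ((continuous_apply 1).comp_continuousOn hcont)
  exact ⟨_, hΔ.image fun x hx x' hx' g =>
    hequiv.apply_eq_of_forall_mul_eq hXinv hM hx hx'⟩

lemma IsShiftInvariant.image {A B : Type*} {X : Set (G → A)} {τ : (G → A) → (G → B)}
    (hX : IsShiftInvariant X) (hτ : IsShiftEquivariantOn τ X) : IsShiftInvariant (τ '' X) := by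
  rintro g _ ⟨x, hx, rfl⟩
  exact ⟨_, hX g x hx, hτ g x hx⟩

lemma IsShiftEquivariantOn.invFunOn_image {A B : Type*} [Nonempty A] {X : Set (G → A)}
    {τ : (G → A) → (G → B)} (hτ : IsShiftEquivariantOn τ X) (hX : IsShiftInvariant X)
    (hinj : InjOn τ X) : IsShiftEquivariantOn (invFunOn τ X) (τ '' X) := by
  rintro g _ ⟨x, hx, rfl⟩
  rw [← hτ g x hx, hinj.leftInvOn_invFunOn (hX g x hx), hinj.leftInvOn_invFunOn hx]

lemma ContinuousOn.invFunOn_image {α β : Type*} [TopologicalSpace α] [Nonempty α]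
    [TopologicalSpace β] [T2Space β] {f : α → β} {s : Set α} (hf : ContinuousOn f s)
    (hs : IsCompact s) (hinj : InjOn f s) : ContinuousOn (invFunOn f s) (f '' s) := by
  refine continuousOn_iff_isClosed.mpr fun t ht => ⟨f '' (s ∩ t),
    ((hs.inter_right ht).image_of_continuousOn (hf.mono inter_subset_left)).isClosed, ?_⟩
  ext y
  constructor
  · rintro ⟨hy, x, hx, rfl⟩
    rw [mem_preimage, hinj.leftInvOn_invFunOn hx] at hy
    exact ⟨mem_image_of_mem f ⟨hx, hy⟩, mem_image_of_mem f hx⟩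
  · rintro ⟨⟨x, ⟨hx, hxt⟩, rfl⟩, hy⟩
    exact ⟨by rwa [mem_preimage, hinj.leftInvOn_invFunOn hx], hy⟩

theorem stronglyIrreducible_conjugacy_invariant_general {A B : Type*} [Fintype A]
    [TopologicalSpace A] [DiscreteTopology A] [TopologicalSpace B] [DiscreteTopology B]
    (X : Set (G → A)) (hX : IsSubshift X) (Y : Set (G → B))
    (τ : (G → A) → (G → B)) (hτ : IsCellularAutomaton X Y τ)
    (hinj : Set.InjOn τ X) (hsurj : τ '' X = Y) :
    StronglyIrreducible X ↔ StronglyIrreducible Y := by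
  have hcont : ContinuousOn τ X := hτ.2.1
  have hequiv : IsShiftEquivariantOn τ X := hτ.2.2
  have hXc : IsCompact X := hX.1.isCompact
  have hXinv : IsShiftInvariant X := hX.2
  subst hsurj
  refine ⟨fun h => h.image hXc hXinv hcont hequiv, fun h => ?_⟩
  cases isEmpty_or_nonempty A
  · exact ⟨∅, fun _ _ _ x => isEmptyElim (x 1)⟩
  · rw [← hinj.leftInvOn_invFunOn.image_image]
    exact h.image (hXc.image_of_continuousOn hcont) (hXinv.image hequiv)
      (hcont.invFunOn_image hXc hinj) (hequiv.invFunOn_image hXinv hinj)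

/-- Strong irreducibility is a conjugacy invariant of subshifts. -/
theorem stronglyIrreducible_conjugacy_invariant {A B : Type*} [Fintype A] [Fintype B]
    [TopologicalSpace A] [DiscreteTopology A] [TopologicalSpace B] [DiscreteTopology B]
    (X : Set (G → A)) (hX : IsSubshift X) (Y : Set (G → B)) (hY : IsSubshift Y)
    (τ : (G → A) → (G → B)) (hτ : IsCellularAutomaton X Y τ)
    (hinj : Set.InjOn τ X) (hsurj : τ '' X = Y) :
    StronglyIrreducible X ↔ StronglyIrreducible Y :=
  stronglyIrreducible_conjugacy_invariant_general X hX Y τ hτ hinj hsurj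
end

section
/- Let G be an amenable group, A a finite set, and F = (F_j)_{j∈J} a Følner net for G. Let X ⊆ A^G be a strongly irreducible subshift containing at least two distinct configurations. Then ent_F(X) > 0. -/
open Pointwise Filter

variable {G : Type*} [Group G]

/-!
Put `D = Δ ∪ Δ⁻¹ ∪ {1}`. A maximal subset `T ⊆ F` of pairwise `D`-separated points
(`t⁻¹ * t' ∉ D`) satisfies `F ⊆ T * D`, hence `|F| ≤ |T| |D|`. By `Δ`-irreducibility and shift
invariance, the symbols of a configuration of `X` at the points of `T` can be chosen independently
between two symbols occurring in `X`, so `|X_F| ≥ 2 ^ |T|`. Every term of the limsup defining the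
entropy is therefore at least `log 2 / |D|`, and all terms are at most `log |A|`, which keeps the
real limsup from collapsing to its junk value.
-/

theorem Finset.exists_subset_pairwise_subset_mul [DecidableEq G] {D : Finset G} (hD₁ : 1 ∈ D)
    (hD : ∀ d ∈ D, d⁻¹ ∈ D) (F : Finset G) :
    ∃ T ⊆ F, (T : Set G).Pairwise (fun t t' => t⁻¹ * t' ∉ D) ∧ F ⊆ T * D := by
  obtain ⟨T, -, ⟨hT, hmax⟩⟩ := (F.powerset.filter fun T : Finset G =>
    (T : Set G).Pairwise fun t t' => t⁻¹ * t' ∉ D).exists_le_maximal (a := ∅) (by simp)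
  simp only [Finset.mem_filter, Finset.mem_powerset] at hT hmax
  refine ⟨T, hT.1, hT.2, fun f hf => ?_⟩
  by_contra hfT
  have hf_left : ∀ t ∈ T, t⁻¹ * f ∉ D := fun t ht hd =>
    hfT (Finset.mem_mul.2 ⟨t, ht, _, hd, mul_inv_cancel_left t f⟩)
  have hf_notMem : f ∉ T := fun h => hfT (Finset.mem_mul.2 ⟨f, h, 1, hD₁, mul_one f⟩)
  have hsep : (insert f T : Set G).Pairwise fun t t' => t⁻¹ * t' ∉ D := by
    refine Set.pairwise_insert.2 ⟨hT.2, fun t ht _ => ⟨fun hd => hf_left t ht ?_, hf_left t ht⟩⟩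
    simpa using hD _ hd
  exact hf_notMem (hmax ⟨Finset.insert_subset hf hT.1, by simpa using hsep⟩
    (Finset.subset_insert f T) (Finset.mem_insert_self f T))

theorem DeltaIrreducible.exists_forall_eq {A : Type*} {Δ : Finset G} {X : Set (G → A)}
    (hX : DeltaIrreducible Δ X) (hshift : ∀ g : G, ∀ x ∈ X, shift g x ∈ X) (hX_ne : X.Nonempty)
    {T : Finset G} (hT : (T : Set G).Pairwise fun t t' => t⁻¹ * t' ∉ Δ)
    (a : G → A) (ha : ∀ t ∈ T, ∃ y ∈ X, y 1 = a t) :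
    ∃ x ∈ X, ∀ t ∈ T, x t = a t := by
  classical
  induction T using Finset.induction_on with
  | empty => obtain ⟨x, hx⟩ := hX_ne; exact ⟨x, hx, by simp⟩
  | insert t T ht ih =>
    rw [Finset.coe_insert, Set.pairwise_insert] at hT
    obtain ⟨x, hxX, hx⟩ := ih hT.1 fun s hs => ha s (Finset.mem_insert_of_mem hs)
    obtain ⟨y, hyX, hy⟩ := ha t (Finset.mem_insert_self t T)
    have hdisj : plusNbhd (({t} : Finset G) : Set G) Δ ∩ T = ∅ := by
      refine Set.eq_empty_of_forall_notMem ?_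
      rintro g ⟨⟨d, hd, hgd⟩, hg⟩
      obtain rfl : d = g⁻¹ * t := by simp_all [eq_inv_mul_iff_mul_eq]
      exact (hT.2 g hg (ne_of_mem_of_not_mem hg ht).symm).2 hd
    obtain ⟨z, hzX, hzt, hzT⟩ := hX {t} T hdisj _ (hshift t y hyX) x hxX
    refine ⟨z, hzX, fun s hs => ?_⟩
    rcases Finset.mem_insert.1 hs with rfl | hs
    · simpa [shift, hy] using hzt s (Finset.mem_singleton_self s)
    · rw [hzT s hs, hx s hs]

theorem DeltaIrreducible.two_pow_card_le_ncard_domRestrict_image {A : Type*} [Finite A]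
    {Δ : Finset G} {X : Set (G → A)} (hX : DeltaIrreducible Δ X)
    (hshift : ∀ g : G, ∀ x ∈ X, shift g x ∈ X) {y₀ y₁ : G → A} (hy₀ : y₀ ∈ X) (hy₁ : y₁ ∈ X) (hy : y₀ 1 ≠ y₁ 1) {T F : Finset G}
    (hTF : T ⊆ F) (hT : (T : Set G).Pairwise fun t t' => t⁻¹ * t' ∉ Δ) :
    2 ^ T.card ≤ (Set.domRestrict (F : Set G) '' X).ncard := by
  classical
  choose x hxX hx using fun S : Finset G =>
    hX.exists_forall_eq hshift ⟨y₀, hy₀⟩ hT (fun t => if t ∈ S then y₀ 1 else y₁ 1)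
      fun t _ => by split_ifs; exacts [⟨y₀, hy₀, rfl⟩, ⟨y₁, hy₁, rfl⟩]
  calc 2 ^ T.card = (T.powerset : Set (Finset G)).ncard := by
        rw [Set.ncard_coe_finset, Finset.card_powerset]
    _ ≤ (Set.domRestrict (F : Set G) '' X).ncard :=
        Set.ncard_le_ncard_of_injOn (fun S => Set.domRestrict F (x S))
          (fun S _ => Set.mem_image_of_mem (Set.domRestrict F) (hxX S)) ?_ (Set.toFinite _)
  intro S hS S' hS' hSS'
  simp only [Finset.coe_powerset, Set.mem_preimage, Set.mem_powerset_iff, Finset.coe_subset]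
    at hS hS'
  ext t
  by_cases ht : t ∈ T
  · have := congrFun hSS' ⟨t, hTF ht⟩
    simp only [Set.domRestrict_apply, hx S t ht, hx S' t ht] at this
    grind
  · exact iff_of_false (fun h => ht (hS h)) (fun h => ht (hS' h))

theorem DeltaIrreducible.exists_pos_le_log_ncard_domRestrict_image_div_card {A : Type*} [Finite A]
    {Δ : Finset G} {X : Set (G → A)} (hX : DeltaIrreducible Δ X)
    (hshift : ∀ g : G, ∀ x ∈ X, shift g x ∈ X) {x₀ x₁ : G → A} (hx₀ : x₀ ∈ X) (hx₁ : x₁ ∈ X)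
    (hne : x₀ ≠ x₁) :
    ∃ c > 0, ∀ F : Finset G, F.Nonempty →
      c ≤ Real.log (Set.domRestrict (F : Set G) '' X).ncard / F.card := by
  classical
  obtain ⟨g, hg⟩ := Function.ne_iff.1 hne
  have hy : shift g⁻¹ x₀ 1 ≠ shift g⁻¹ x₁ 1 := by simpa [shift] using hg
  set D := Δ ∪ Δ⁻¹ ∪ {1}
  have hD₁ : 1 ∈ D := by simp [D]
  have hD : ∀ d ∈ D, d⁻¹ ∈ D := by simp only [D, Finset.mem_union, Finset.mem_inv',
    Finset.mem_singleton, inv_inv, inv_eq_one]; tauto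
  have hDpos : (0 : ℝ) < D.card := Nat.cast_pos.2 (Finset.card_pos.2 ⟨1, hD₁⟩)
  refine ⟨Real.log 2 / D.card, div_pos (Real.log_pos one_lt_two) hDpos, fun F hF => ?_⟩
  obtain ⟨T, hTF, hT, hFT⟩ := Finset.exists_subset_pairwise_subset_mul hD₁ hD F
  have hcard : (F.card : ℝ) ≤ T.card * D.card := by
    exact_mod_cast (Finset.card_le_card hFT).trans Finset.card_mul_le
  have hcount := hX.two_pow_card_le_ncard_domRestrict_image hshift (hshift _ _ hx₀)
    (hshift _ _ hx₁) hy hTF (hT.mono' fun t t' h hd => h (by simp [D, hd]))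
  have hFpos : (0 : ℝ) < F.card := Nat.cast_pos.2 (Finset.card_pos.2 hF)
  calc Real.log 2 / D.card ≤ T.card * Real.log 2 / F.card := by
        rw [div_le_div_iff₀ hDpos hFpos]
        nlinarith [Real.log_pos one_lt_two]
    _ = Real.log (2 ^ T.card : ℕ) / F.card := by push_cast; rw [Real.log_pow]
    _ ≤ _ := by gcongr

theorem log_ncard_domRestrict_image_div_card_le {ι A : Type*} [Finite A] (X : Set (ι → A))
    (F : Finset ι) :
    Real.log (Set.domRestrict (F : Set ι) '' X).ncard / F.card ≤ Real.log (Nat.card A) := by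
  refine div_le_of_le_mul₀ (Nat.cast_nonneg _) (Real.log_natCast_nonneg _) ?_
  have hn : (Set.domRestrict (F : Set ι) '' X).ncard ≤ Nat.card A ^ F.card := by
    simpa only [Nat.card_fun, Nat.card_coe_set_eq, Set.ncard_coe_finset] using
      Set.ncard_le_card (Set.domRestrict (F : Set ι) '' X)
  rcases Nat.eq_zero_or_pos (Set.domRestrict (F : Set ι) '' X).ncard with h | h
  · rw [h, Nat.cast_zero, Real.log_zero]
    exact mul_nonneg (Real.log_natCast_nonneg _) (Nat.cast_nonneg _)
  · calc _ ≤ Real.log (Nat.card A ^ F.card : ℕ) := by gcongr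
      _ = _ := by push_cast; rw [Real.log_pow, mul_comm]

theorem entropy_pos_general {A : Type*} [Fintype A]
    [TopologicalSpace A]
    {J : Type*} [Nonempty J] [Preorder J] [IsDirected J (· ≤ ·)]
    (F : J → Finset G) (hF : IsFolnerNet F)
    (X : Set (G → A)) (hX : IsSubshift X) (hSI : StronglyIrreducible X)
    (x₀ x₁ : G → A) (hx₀ : x₀ ∈ X) (hx₁ : x₁ ∈ X) (hne : x₀ ≠ x₁) :
    0 < entropy F X := by
  obtain ⟨Δ, hΔ⟩ := hSI
  obtain ⟨c, hc, hle⟩ := hΔ.exists_pos_le_log_ncard_domRestrict_image_div_card hX.2 hx₀ hx₁ hne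
  have hbdd : IsBoundedUnder (· ≤ ·) atTop
      fun j => Real.log (Set.domRestrict (F j : Set G) '' X).ncard / (F j).card :=
    isBoundedUnder_of ⟨_, fun j => log_ncard_domRestrict_image_div_card_le X (F j)⟩
  exact hc.trans_le (le_limsup_of_frequently_le (.of_forall fun j => hle _ (hF.1 j)) hbdd)

/-- A strongly irreducible subshift with at least two configurations has positive entropy. -/
theorem entropy_pos {A : Type*} [Fintype A]
    [TopologicalSpace A] [DiscreteTopology A]
    {J : Type*} [Nonempty J] [Preorder J] [IsDirected J (· ≤ ·)]
    (F : J → Finset G) (hF : IsFolnerNet F)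
    (X : Set (G → A)) (hX : IsSubshift X) (hSI : StronglyIrreducible X)
    (x₀ x₁ : G → A) (hx₀ : x₀ ∈ X) (hx₁ : x₁ ∈ X) (hne : x₀ ≠ x₁) :
    0 < entropy F X :=
  entropy_pos_general F hF X hX hSI x₀ x₁ hx₀ hx₁ hne
end

section
/- Let G be a group, A a finite set, Δ a finite subset of G, and X ⊆ A^G a Δ-irreducible subshift. Suppose (Ω_i)_{i∈I} is a (possibly infinite) family of (possibly infinite) subsets of G such that Ω_i^{+Δ} ∩ (⋃_{k∈I, k≠i} Ω_k) = ∅ for all i ∈ I. Then, given any family (x_i)_{i∈I} of configurations in X, there exists a configuration x ∈ X which coincides with x_i on Ω_i for all i ∈ I. -/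
open Pointwise Filter

variable {G : Type*} [Group G]

/-!
On a finite window `F`, `Δ`-irreducibility glues finitely many of the `x i` one index at a time,
since the part of `F` in `Ω j` is `Δ`-separated from the part of `F` in the other `Ω k`. The sets
of such gluings form a directed family of nonempty closed subsets of the compact space `A^G`;
a point of their intersection agrees with every `x i` on `Ω i`.
-/

open Set

lemma plusNbhd_mono {Ω Ω' : Set G} (Δ : Set G) (h : Ω ⊆ Ω') : plusNbhd Ω Δ ⊆ plusNbhd Ω' Δ :=
  fun _ ⟨d, hd, hgd⟩ => ⟨d, hd, h hgd⟩

lemma isClosed_setOf_eqOn {α A : Type*} [TopologicalSpace A] [T2Space A] (z : α → A) (s : Set α) :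
    IsClosed {y : α → A | EqOn y z s} := by
  simp only [EqOn, ofPred_forall]
  exact isClosed_biInter fun g _ => isClosed_eq (continuous_apply g) continuous_const

lemma DeltaIrreducible.exists_eqOn_finset {A : Type*} {Δ : Finset G} {X : Set (G → A)}
    (hΔ : DeltaIrreducible Δ X) (hX : X.Nonempty) {I : Type*} {Ω : I → Set G}
    (hsep : ∀ i : I, plusNbhd (Ω i) (Δ : Set G) ∩ (⋃ (k : I) (_ : k ≠ i), Ω k) = ∅)
    {x : I → (G → A)} (hx : ∀ i, x i ∈ X) (S : Finset I) (F : Finset G) :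
    ∃ y ∈ X, ∀ i ∈ S, EqOn y (x i) (F ∩ Ω i) := by
  classical
  induction S using Finset.induction_on with
  | empty => exact ⟨hX.some, hX.some_mem, by simp⟩
  | @insert j S hj ih =>
    obtain ⟨y', hy'X, hy'⟩ := ih
    let Ω₁ : Finset G := F.filter (· ∈ Ω j)
    let Ω₂ : Finset G := F.filter (fun g => ∃ k ∈ S, g ∈ Ω k)
    have hΩ₂ : (Ω₂ : Set G) ⊆ ⋃ (k : I) (_ : k ≠ j), Ω k := by
      intro g hg
      obtain ⟨k, hkS, hgk⟩ := (Finset.mem_filter.mp hg).2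
      exact mem_biUnion (fun hkj : k = j => hj (hkj ▸ hkS)) hgk
    have hdisj : plusNbhd (Ω₁ : Set G) (Δ : Set G) ∩ (Ω₂ : Set G) = ∅ :=
      subset_eq_empty (inter_subset_inter
        (plusNbhd_mono _ fun g hg => (Finset.mem_filter.mp hg).2) hΩ₂) (hsep j)
    obtain ⟨y, hyX, hy₁, hy₂⟩ := hΔ Ω₁ Ω₂ hdisj (x j) (hx j) y' hy'X
    refine ⟨y, hyX, fun i hi g ⟨hgF, hgΩ⟩ => ?_⟩
    rcases Finset.mem_insert.mp hi with rfl | hiS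
    · exact hy₁ g (Finset.mem_filter.mpr ⟨hgF, hgΩ⟩)
    · rw [hy₂ g (Finset.mem_filter.mpr ⟨hgF, i, hiS, hgΩ⟩)]
      exact hy' i hiS ⟨hgF, hgΩ⟩

/-- Gluing lemma: configurations of a `Δ`-irreducible subshift prescribed on a
`Δ`-separated family of subsets can be glued to a single configuration. -/
theorem glue_of_deltaIrreducible {A : Type*} [Fintype A]
    [TopologicalSpace A] [DiscreteTopology A]
    (Δ : Finset G) (X : Set (G → A)) (hX : IsSubshift X) (hΔ : DeltaIrreducible Δ X)
    {I : Type*} [Nonempty I] (Ω : I → Set G)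
    (hsep : ∀ i : I, plusNbhd (Ω i) (Δ : Set G) ∩ (⋃ (k : I) (_ : k ≠ i), Ω k) = ∅)
    (x : I → (G → A)) (hx : ∀ i, x i ∈ X) :
    ∃ y ∈ X, ∀ i : I, ∀ g ∈ Ω i, y g = x i g := by
  classical
  let C : Finset I × Finset G → Set (G → A) := fun p =>
    X ∩ ⋂ i ∈ p.1, {y | EqOn y (x i) (p.2 ∩ Ω i)}
  have hC_anti : Antitone C := fun p q hpq y ⟨hyX, hy⟩ =>
    ⟨hyX, mem_iInter₂.mpr fun i hi =>
      (mem_iInter₂.mp hy i (hpq.1 hi)).mono (inter_subset_inter_left _ (by simpa using hpq.2))⟩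
  have hC_ne (p : Finset I × Finset G) : (C p).Nonempty := by
    obtain ⟨y, hyX, hy⟩ :=
      hΔ.exists_eqOn_finset ⟨_, hx (Classical.arbitrary I)⟩ hsep hx p.1 p.2
    exact ⟨y, hyX, mem_iInter₂.mpr hy⟩
  have hC_closed (p : Finset I × Finset G) : IsClosed (C p) :=
    hX.1.inter (isClosed_biInter fun i _ => isClosed_setOf_eqOn (x i) _)
  obtain ⟨y, hy⟩ := IsCompact.nonempty_iInter_of_directed_nonempty_isCompact_isClosed C
    hC_anti.directed_ge hC_ne (fun p => (hC_closed p).isCompact) hC_closed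
  have hyC (p) : y ∈ C p := mem_iInter.mp hy p
  refine ⟨y, (hyC default).1, fun i g hg => ?_⟩
  exact mem_iInter₂.mp (hyC ({i}, {g})).2 i (Finset.mem_singleton_self i)
    ⟨Finset.mem_singleton_self g, hg⟩
end
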